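/- Let Λ = (λ, χ^1,...,χ^N) with λ even, χ^i odd satisfying [χ^i,χ^j] = -2δ_{ij}λ and [λ,χ^i]=0 (the N_K=N parameter algebra). Setting (Z-W)Λ = (z-w-Σθ^iζ^i)λ + Σ(θ^i-ζ^i)χ^i, the exponential exp((Z-W)Λ) satisfies D^i_Z exp((Z-W)Λ) = χ^i exp((Z-W)Λ), where D^i_Z = ∂_{θ^i} + θ^i∂_z. -/

import Mathlib

noncomputable section

/-- The Grassmann algebra on `k` groups of `N` odd generators (e.g. `θ`'s, `ζ`'s, `χ`'s),
modelled as an exterior algebra. -/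
abbrev Gr (k N : ℕ) : Type := ExteriorAlgebra ℂ (Fin k × Fin N → ℂ)

/-- The `i`-th odd generator of the `g`-th group. -/
def gv {k N : ℕ} (g : Fin k) (i : Fin N) : Gr k N :=
  ExteriorAlgebra.ι ℂ (Pi.single (g, i) (1:ℂ))

/-- The odd (left) derivative with respect to the `i`-th generator of group `g`,
realized as contraction in the exterior algebra. -/
def dgv {k N : ℕ} (g : Fin k) (i : Fin N) : Module.End ℂ (Gr k N) :=
  CliffordAlgebra.contractLeft (LinearMap.proj (g, i))

/-- Iterated odd derivative extracting the coefficient of the full top monomial of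
group `g` (applying `∂_1` first, then `∂_2`, etc.). -/
def resG {k N : ℕ} (g : Fin k) : Module.End ℂ (Gr k N) :=
  (((List.finRange N).map (dgv g)).reverse).prod

/-- The reordering sign `σ(I,J)` determined by `θ^I θ^J = σ(I,J) θ^{I∪J}` for disjoint
ordered subsets, and `0` otherwise. -/
def sgn {N : ℕ} (I J : Finset (Fin N)) : ℤ :=
  if Disjoint I J then (-1)^(((I ×ˢ J).filter (fun p => p.2 < p.1)).card) else 0

/-- Ordered (increasing) product of the elements `f i`, `i ∈ J`. -/
def oprod {k N : ℕ} (J : Finset (Fin N)) (f : Fin N → Gr k N) : Gr k N :=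
  ((J.sort (· ≤ ·)).map f).prod

namespace Stmt17

variable {N : ℕ}

-- group 0 = θ's, group 1 = ζ's.  The odd N_K parameters χ^i (which do NOT square to
-- zero: [χ^i,χ^j] = -2δ_{ij}λ) are encoded by the index `K : Finset (Fin N)`, and the
-- `λ`-degree by an index `k : ℕ`; monomials are normal-ordered as
-- `z^a w^b λ^k χ^K ⋅ (θζ-part)`.

/-- Formal series in `z, w, λ, χ` with Grassmann (`θ,ζ`) coefficients. -/
abbrev NKSeries (N : ℕ) : Type := ℤ → ℤ → ℕ → Finset (Fin N) → Gr 2 N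

/-- `Σ_i θ^i ζ^i`. -/
def qq (N : ℕ) : Gr 2 N := ∑ i : Fin N, gv 0 i * gv 1 i

/-- `(θ-ζ)^K`. -/
def tK (K : Finset (Fin N)) : Gr 2 N := oprod K (fun i => gv 0 i - gv 1 i)

/-- The coefficient of `z^a w^b λ^k` in `exp((z - w - Σθ^iζ^i)λ)`. -/
def expEvenCoef (N : ℕ) (a b : ℤ) (k : ℕ) : Gr 2 N :=
  (k.factorial : ℂ)⁻¹ • ∑ r ∈ Finset.range (k + 1),
    (if 0 ≤ a ∧ 0 ≤ b ∧ a + b = ((k : ℤ) - r) then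
      ((-1 : ℂ)^r * (k.choose r) * (-1 : ℂ)^(b.toNat) * ((k - r).choose b.toNat))
    else 0) • (qq N)^r

/-- The exponential `exp((Z-W)Λ) = exp((z-w-Σθ^iζ^i)λ + Σ(θ^i-ζ^i)χ^i)` in the `N_K`
case, written in normal-ordered coefficients. -/
def expNK (N : ℕ) : NKSeries N :=
  fun a b k K =>
    ((-1 : ℂ)^(K.card * (K.card + 1) / 2)) •
      (expEvenCoef N a b k * tK K)

/-- Left multiplication by `χ^i`, using the relations `χ^iχ^j + χ^jχ^i = -2δ_{ij}λ`. -/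
def chiMul (i : Fin N) (F : NKSeries N) : NKSeries N :=
  fun a b k K =>
    (if i ∈ K then ((sgn {i} (K.erase i) : ℂ)) • F a b k (K.erase i) else 0) +
    (if i ∉ K ∧ 1 ≤ k then
      (-((-1 : ℂ)^((K.filter (· < i)).card))) • F a b (k - 1) (insert i K)
    else 0)

/-- The super derivative `D^i_Z = ∂_{θ^i} + θ^i ∂_z` (the sign `(-1)^{|K|}` accounts for
passing the odd operator through `χ^K`). -/
def DZ (i : Fin N) (F : NKSeries N) : NKSeries N :=
  fun a b k K =>
    ((-1 : ℂ)^(K.card)) •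
      (dgv 0 i (F a b k K) + gv 0 i * (((a : ℂ) + 1) • F (a + 1) b k K))

end Stmt17

/-!
The coefficient of `z^a w^b λ^k χ^K` in `exp((Z-W)Λ)` is `±E(a,b,k)·(θ-ζ)^K`, where `E(a,b,k)`,
the corresponding coefficient of `exp((z-w-q)λ)` with `q = Σθ^iζ^i`, is a multiple of a power of
the central element `q`. Since `∂_{θ^i}(q x) = ζ^i x + q ∂_{θ^i} x`, the derivative `∂_{θ^i}` acts
on `E` as `-ζ^i∂_z`, so `D^i_Z (E·(θ-ζ)^K) = (∂_z E)·(θ^i-ζ^i)(θ-ζ)^K + E·∂_{θ^i}(θ-ζ)^K`.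
For `i ∈ K` only the second term survives and deletes `i` from `K`; for `i ∉ K` only the first
does, inserting `i` into `K`, and `∂_z` multiplies the even exponential by `λ`. This is left
multiplication by `χ^i`, which turns `χ^{K∖i}` into `χ^K` and, since `(χ^i)^2 = -λ`, turns
`χ^{K∪i}` into `-λχ^K`; the normal-ordering signs `(-1)^{|K|(|K|+1)/2}` account for the rest.
-/

theorem map_pow_mul_of_map_mul {A F : Type*} [Semiring A] [FunLike F A A]
    [AddMonoidHomClass F A A] (D : F) {q c : A} (hqc : Commute q c)
    (hD : ∀ x, D (q * x) = c * x + q * D x) (n : ℕ) (x : A) :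
    D (q ^ n * x) = n • (c * q ^ (n - 1) * x) + q ^ n * D x := by
  induction n generalizing x with
  | zero => simp
  | succ n ih =>
    have hcomm : n • (q * (c * q ^ (n - 1) * x)) = n • (c * q ^ n * x) := by
      rcases n with _ | n
      · simp
      · rw [← mul_assoc, ← mul_assoc, hqc.eq, mul_assoc c, ← pow_succ', Nat.add_sub_cancel]
    rw [pow_succ', mul_assoc, hD, ih, mul_add, mul_smul_comm, hcomm, ← mul_assoc q, ← pow_succ',
      Nat.add_sub_cancel, succ_nsmul, mul_assoc c]
    abel

namespace ExteriorAlgebra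

variable {R M : Type*} [CommRing R] [AddCommGroup M] [Module R M]

theorem ι_mul_ι_anticomm (u v : M) : ι R u * ι R v = -(ι R v * ι R u) :=
  eq_neg_of_add_eq_zero_left (ι_add_mul_swap u v)

theorem commute_ι_mul_ι (u v : M) (x : ExteriorAlgebra R M) : Commute (ι R u * ι R v) x := by
  induction x using ExteriorAlgebra.induction with
  | algebraMap r => exact (Algebra.commutes r _).symm
  | ι w =>
    simp only [Commute, SemiconjBy, mul_assoc]
    rw [ι_mul_ι_anticomm v w, mul_neg, ← mul_assoc, ι_mul_ι_anticomm u w, neg_mul, neg_neg,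
      mul_assoc]
  | mul x y hx hy => exact hx.mul_right hy
  | add x y hx hy => exact hx.add_right hy

theorem contractLeft_ι_mul (d : Module.Dual R M) (u : M) (x : ExteriorAlgebra R M) :
    CliffordAlgebra.contractLeft d (ι R u * x)
      = d u • x - ι R u * CliffordAlgebra.contractLeft d x :=
  CliffordAlgebra.contractLeft_ι_mul _ _ _

theorem contractLeft_ι_mul_ι_mul (d : Module.Dual R M) (u v : M) (x : ExteriorAlgebra R M) :
    CliffordAlgebra.contractLeft d (ι R u * ι R v * x)
      = d u • (ι R v * x) - d v • (ι R u * x)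
        + ι R u * ι R v * CliffordAlgebra.contractLeft d x := by
  rw [mul_assoc, contractLeft_ι_mul, contractLeft_ι_mul, mul_sub, mul_smul_comm,
    mul_assoc (ι R u)]
  abel

theorem ι_mul_prod_map_ι_of_mem {v : M} {l : List M} (hv : v ∈ l) :
    ι R v * (l.map (ι R)).prod = 0 := by
  induction l with
  | nil => simp at hv
  | cons w l ih =>
    rw [List.map_cons, List.prod_cons, ← mul_assoc]
    rcases List.mem_cons.mp hv with rfl | hv
    · rw [ι_sq_zero, zero_mul]
    · rw [ι_mul_ι_anticomm, neg_mul, mul_assoc, ih hv, mul_zero, neg_zero]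

theorem contractLeft_prod_map_ι_of_forall_eq_zero {d : Module.Dual R M} {l : List M}
    (hd : ∀ v ∈ l, d v = 0) : CliffordAlgebra.contractLeft d (l.map (ι R)).prod = 0 := by
  induction l with
  | nil => exact CliffordAlgebra.contractLeft_one _ d
  | cons w l ih =>
    rw [List.map_cons, List.prod_cons, contractLeft_ι_mul, hd w List.mem_cons_self,
      ih fun v hv => hd v (List.mem_cons_of_mem w hv), zero_smul, mul_zero, sub_zero]

theorem prod_map_ι_orderedInsert {α : Type*} [LinearOrder α] (f : α → M) (a : α) {l : List α}
    (hl : l.Pairwise (· ≤ ·)) :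
    ((l.orderedInsert (· ≤ ·) a).map (ι R ∘ f)).prod
      = (-1 : R) ^ (l.filter (· < a)).length • (ι R (f a) * (l.map (ι R ∘ f)).prod) := by
  induction l with
  | nil => simp
  | cons b l ih =>
    rw [List.pairwise_cons] at hl
    by_cases hab : a ≤ b
    · have hnil : (b :: l).filter (· < a) = [] := List.filter_eq_nil_iff.mpr fun c hc => by
        rcases List.mem_cons.mp hc with rfl | hc
        · simpa using hab
        · simpa using hab.trans (hl.1 c hc)
      simp [List.orderedInsert_cons_of_le _ _ hab, hnil]
    · have hba : b < a := lt_of_not_ge hab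
      rw [List.orderedInsert_of_not_le _ _ hab, List.map_cons, List.prod_cons, ih hl.2,
        List.filter_cons_of_pos (by simpa using hba), List.length_cons, pow_succ, mul_smul_comm,
        ← mul_assoc, Function.comp_apply, ι_mul_ι_anticomm, List.map_cons, List.prod_cons,
        neg_mul, mul_assoc, mul_neg_one, neg_smul, smul_neg, Function.comp_apply]

end ExteriorAlgebra

theorem Finset.sort_insert_eq_orderedInsert {α : Type*} [LinearOrder α] {a : α} {s : Finset α}
    (h : a ∉ s) : (insert a s).sort (· ≤ ·) = (s.sort (· ≤ ·)).orderedInsert (· ≤ ·) a := by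
  refine List.Perm.eq_of_pairwise' (Finset.pairwise_sort _ _)
    ((Finset.pairwise_sort _ _).orderedInsert _ _) ?_
  refine (Multiset.coe_eq_coe.mp ?_).trans (List.perm_orderedInsert _ _ _).symm
  rw [Finset.sort_eq, ← Multiset.cons_coe, Finset.sort_eq, Finset.insert_val_of_notMem h]

theorem Finset.length_filter_sort {α : Type*} [LinearOrder α] (s : Finset α) (p : α → Prop)
    [DecidablePred p] : ((s.sort (· ≤ ·)).filter p).length = (s.filter p).card := by
  rw [Finset.card_def, Finset.filter_val, ← Finset.sort_eq s (· ≤ ·), Multiset.filter_coe,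
    Multiset.coe_card]

namespace Stmt17

open ExteriorAlgebra

variable {N : ℕ}

def diffVec (i : Fin N) : Fin 2 × Fin N → ℂ := Pi.single (0, i) 1 - Pi.single (1, i) 1

theorem gv_sub_gv (i : Fin N) : gv 0 i - gv 1 i = ι ℂ (diffVec i) := by
  rw [diffVec, map_sub, gv, gv]

theorem tK_eq_prod (K : Finset (Fin N)) :
    tK K = ((K.sort (· ≤ ·)).map (ι ℂ ∘ diffVec)).prod := by
  simp only [tK, oprod, gv_sub_gv]
  rfl

theorem tK_insert {i : Fin N} {K : Finset (Fin N)} (h : i ∉ K) :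
    tK (insert i K) = (-1 : ℂ) ^ (K.filter (· < i)).card • ((gv 0 i - gv 1 i) * tK K) := by
  rw [tK_eq_prod, tK_eq_prod, Finset.sort_insert_eq_orderedInsert h,
    prod_map_ι_orderedInsert _ _ (Finset.pairwise_sort _ _), Finset.length_filter_sort,
    gv_sub_gv]

theorem sub_mul_tK_of_notMem {i : Fin N} {K : Finset (Fin N)} (h : i ∉ K) :
    (gv 0 i - gv 1 i) * tK K = (-1 : ℂ) ^ (K.filter (· < i)).card • tK (insert i K) := by
  rw [tK_insert h, smul_smul, ← pow_add, ← two_mul, pow_mul, neg_one_sq, one_pow, one_smul]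

theorem sub_mul_tK_of_mem {i : Fin N} {K : Finset (Fin N)} (h : i ∈ K) :
    (gv 0 i - gv 1 i) * tK K = 0 := by
  rw [gv_sub_gv, tK_eq_prod, ← List.map_map]
  exact ι_mul_prod_map_ι_of_mem (List.mem_map_of_mem (by simpa using h))

theorem dgv_tK_of_notMem {i : Fin N} {K : Finset (Fin N)} (h : i ∉ K) : dgv 0 i (tK K) = 0 := by
  rw [tK_eq_prod, ← List.map_map]
  refine contractLeft_prod_map_ι_of_forall_eq_zero fun v hv => ?_
  obtain ⟨j, hj, rfl⟩ := List.mem_map.mp hv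
  have hji : j ≠ i := by rintro rfl; exact h (by simpa using hj)
  simp [diffVec, hji]

theorem dgv_tK_of_mem {i : Fin N} {K : Finset (Fin N)} (h : i ∈ K) :
    dgv 0 i (tK K) = (-1 : ℂ) ^ (K.filter (· < i)).card • tK (K.erase i) := by
  have hK := tK_insert (Finset.notMem_erase i K)
  rw [Finset.insert_erase h, Finset.filter_erase, Finset.erase_eq_of_notMem (by simp)] at hK
  rw [hK, map_smul, gv_sub_gv, dgv, contractLeft_ι_mul, ← dgv,
    dgv_tK_of_notMem (Finset.notMem_erase i K)]
  simp [diffVec]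

theorem sgn_singleton_erase (i : Fin N) (K : Finset (Fin N)) :
    (sgn {i} (K.erase i) : ℂ) = (-1 : ℂ) ^ (K.filter (· < i)).card := by
  have hcard : (({i} ×ˢ K.erase i).filter fun p => p.2 < p.1).card = (K.filter (· < i)).card := by
    refine Finset.card_bij (fun p _ => p.2) ?_ ?_ ?_ <;> simp +contextual [Prod.ext_iff]
    · exact fun j _ hji => hji.ne
  rw [sgn, if_pos (by simp), hcard]
  push_cast
  rfl

theorem commute_qq (x : Gr 2 N) : Commute (qq N) x :=
  Commute.sum_left _ _ _ fun _ _ => commute_ι_mul_ι _ _ x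

theorem dgv_qq_mul (i : Fin N) (x : Gr 2 N) :
    dgv 0 i (qq N * x) = gv 1 i * x + qq N * dgv 0 i x := by
  simp only [qq, Finset.sum_mul, map_sum, gv, dgv, contractLeft_ι_mul_ι_mul,
    Finset.sum_add_distrib]
  congr 1
  simp [Pi.single_apply, Prod.ext_iff]

-- The coefficient of `z^a w^b q^r` in `exp(z - w - q)`.
def expCoef (a b r : ℤ) : ℂ :=
  if 0 ≤ a ∧ 0 ≤ b ∧ 0 ≤ r then
    (-1) ^ (b.toNat + r.toNat) / (a.toNat.factorial * b.toNat.factorial * r.toNat.factorial)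
  else 0

theorem add_one_mul_expCoef (a b r : ℤ) : ((a : ℂ) + 1) * expCoef (a + 1) b r = expCoef a b r := by
  rcases lt_trichotomy a (-1) with ha | rfl | ha
  · simp [expCoef, show ¬0 ≤ a by omega, show ¬0 ≤ a + 1 by omega]
  · simp [expCoef]
  lift a to ℕ using (by omega)
  by_cases hbr : 0 ≤ b ∧ 0 ≤ r
  · have ha : ((a : ℤ) + 1).toNat = a + 1 := by omega
    rw [expCoef, expCoef, if_pos ⟨by omega, hbr⟩, if_pos ⟨by omega, hbr⟩, ha, Int.toNat_natCast,
      Nat.factorial_succ]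
    push_cast
    field_simp
  · simp [expCoef, hbr]

theorem toNat_mul_expCoef (a b r : ℤ) : (r.toNat : ℂ) * expCoef a b r = -expCoef a b (r - 1) := by
  rcases le_or_gt r 0 with hr | hr
  · rw [Int.toNat_eq_zero.mpr hr, Nat.cast_zero, zero_mul, expCoef, if_neg (by omega), neg_zero]
  obtain ⟨n, rfl⟩ : ∃ n : ℕ, r = n + 1 := ⟨(r - 1).toNat, by omega⟩
  by_cases hab : 0 ≤ a ∧ 0 ≤ b
  · have hn : ((n : ℤ) + 1).toNat = n + 1 := by omega
    rw [expCoef, expCoef, if_pos ⟨hab.1, hab.2, by omega⟩, if_pos ⟨hab.1, hab.2, by omega⟩, hn,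
      add_sub_cancel_right, Int.toNat_natCast, Nat.factorial_succ, ← add_assoc, pow_succ]
    push_cast
    field_simp
  · rw [expCoef, expCoef, if_neg (by tauto), if_neg (by tauto), mul_zero, neg_zero]

theorem expEvenCoef_eq (a b : ℤ) (k : ℕ) :
    expEvenCoef N a b k = expCoef a b (k - a - b) • qq N ^ (k - a - b).toNat := by
  rw [expEvenCoef]
  by_cases h : 0 ≤ a ∧ 0 ≤ b ∧ a + b ≤ k
  · obtain ⟨ha, hb, hk⟩ := h
    lift a to ℕ using ha
    lift b to ℕ using hb
    obtain ⟨r, rfl⟩ : ∃ r : ℕ, k = a + b + r := ⟨k - a - b, by omega⟩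
    have hr : ((a + b + r : ℕ) - (a : ℤ) - b).toNat = r := by omega
    rw [hr, Finset.sum_eq_single r, if_pos (by push_cast; omega), smul_smul, expCoef,
      if_pos (by omega), hr, Int.toNat_natCast, Nat.add_sub_cancel]
    · congr 1
      have h1 := Nat.add_choose_mul_factorial_mul_factorial (a + b) r
      have h2 := Nat.add_choose_mul_factorial_mul_factorial a b
      have hc1 : ((a + b + r).choose r : ℂ) ≠ 0 := mod_cast (Nat.choose_pos (by omega)).ne'
      have hc2 : ((a + b).choose b : ℂ) ≠ 0 := mod_cast (Nat.choose_pos (by omega)).ne'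
      rw [Int.toNat_natCast, ← h1, ← h2]
      push_cast
      field_simp
      ring
    · intro s _ hs
      rw [if_neg (by omega), zero_smul]
    · intro hr'
      simp at hr'
  · rw [Finset.sum_eq_zero fun r _ => by rw [if_neg (by omega), zero_smul], smul_zero, expCoef,
      if_neg (by omega), zero_smul]

theorem commute_expEvenCoef (a b : ℤ) (k : ℕ) (x : Gr 2 N) : Commute (expEvenCoef N a b k) x := by
  rw [expEvenCoef_eq]
  exact ((commute_qq x).pow_left _).smul_left _

theorem add_one_smul_expEvenCoef_succ (a b : ℤ) (k : ℕ) :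
    ((a : ℂ) + 1) • expEvenCoef N (a + 1) b (k + 1) = expEvenCoef N a b k := by
  rw [expEvenCoef_eq, expEvenCoef_eq, smul_smul,
    show ((k + 1 : ℕ) : ℤ) - (a + 1) - b = k - a - b by push_cast; ring, add_one_mul_expCoef]

theorem add_one_smul_expEvenCoef_zero (a b : ℤ) :
    ((a : ℂ) + 1) • expEvenCoef N (a + 1) b 0 = 0 := by
  rw [expEvenCoef_eq, smul_smul, add_one_mul_expCoef, expCoef, if_neg (by omega), zero_smul]

theorem dgv_expEvenCoef_mul (i : Fin N) (a b : ℤ) (k : ℕ) (x : Gr 2 N) :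
    dgv 0 i (expEvenCoef N a b k * x)
      = -((a : ℂ) + 1) • (gv 1 i * (expEvenCoef N (a + 1) b k * x))
        + expEvenCoef N a b k * dgv 0 i x := by
  rw [expEvenCoef_eq, expEvenCoef_eq, smul_mul_assoc, map_smul,
    map_pow_mul_of_map_mul (dgv 0 i) (commute_qq _) (dgv_qq_mul i), smul_add, smul_mul_assoc]
  congr 1
  · rw [show (k : ℤ) - (a + 1) - b = k - a - b - 1 by ring,
      show (k - a - b - 1 : ℤ).toNat = (k - a - b : ℤ).toNat - 1 by omega,
      ← Nat.cast_smul_eq_nsmul ℂ, smul_smul, mul_comm, toNat_mul_expCoef, ← add_one_mul_expCoef,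
      mul_smul_comm, smul_smul, neg_mul, mul_assoc]
  · rw [smul_mul_assoc]

theorem dgv_expEvenCoef_mul_tK_add (i : Fin N) (a b : ℤ) (k : ℕ) (K : Finset (Fin N)) :
    dgv 0 i (expEvenCoef N a b k * tK K)
        + gv 0 i * (((a : ℂ) + 1) • (expEvenCoef N (a + 1) b k * tK K))
      = (((a : ℂ) + 1) • expEvenCoef N (a + 1) b k) * ((gv 0 i - gv 1 i) * tK K)
        + expEvenCoef N a b k * dgv 0 i (tK K) := by
  have hE (x : Gr 2 N) : x * (expEvenCoef N (a + 1) b k * tK K)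
      = expEvenCoef N (a + 1) b k * (x * tK K) := by
    rw [← mul_assoc, (commute_expEvenCoef (a + 1) b k x).symm.eq, mul_assoc]
  rw [dgv_expEvenCoef_mul, mul_smul_comm, hE, hE, smul_mul_assoc, sub_mul, mul_sub]
  module

theorem neg_one_pow_triangle_succ {R : Type*} [Monoid R] [HasDistribNeg R] (m : ℕ) :
    (-1 : R) ^ ((m + 1) * (m + 1 + 1) / 2) = (-1) ^ (m + 1) * (-1) ^ (m * (m + 1) / 2) := by
  rw [← pow_add, show (m + 1) * (m + 1 + 1) = m * (m + 1) + 2 * (m + 1) by ring,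
    Nat.add_mul_div_left _ _ two_pos, add_comm]

/-- In the `N_K = N` parameter algebra (`λ` even, `χ^i` odd with `[χ^i,χ^j] = -2δ_{ij}λ`,
`[λ,χ^i] = 0`), setting `(Z-W)Λ = (z-w-Σθ^iζ^i)λ + Σ(θ^i-ζ^i)χ^i`, the exponential
satisfies `D^i_Z exp((Z-W)Λ) = χ^i exp((Z-W)Λ)`, where `D^i_Z = ∂_{θ^i} + θ^i∂_z`. -/
theorem stmt17 (N : ℕ) (i : Fin N) : DZ i (expNK N) = chiMul i (expNK N) := by
  funext a b k K
  simp only [DZ, chiMul, expNK]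
  rw [map_smul, smul_comm ((a : ℂ) + 1), mul_smul_comm, ← smul_add,
    dgv_expEvenCoef_mul_tK_add]
  by_cases hiK : i ∈ K
  · rw [sub_mul_tK_of_mem hiK, mul_zero, zero_add, dgv_tK_of_mem hiK, if_pos hiK,
      if_neg (by simp [hiK]), add_zero, sgn_singleton_erase, ← Finset.card_erase_add_one hiK,
      mul_smul_comm, smul_smul, smul_smul, smul_smul, neg_one_pow_triangle_succ]
    congr 1
    rw [← mul_assoc, ← pow_add, ← two_mul, pow_mul, neg_one_sq, one_pow, one_mul, mul_comm]
  · rw [sub_mul_tK_of_notMem hiK, dgv_tK_of_notMem hiK, mul_zero, add_zero, if_neg hiK, zero_add]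
    cases k with
    | zero =>
      rw [add_one_smul_expEvenCoef_zero, zero_mul, smul_zero, smul_zero, if_neg (by simp)]
    | succ k =>
      rw [add_one_smul_expEvenCoef_succ, if_pos ⟨hiK, by omega⟩, Finset.card_insert_of_notMem hiK,
        neg_one_pow_triangle_succ, mul_smul_comm, smul_smul, smul_smul, smul_smul,
        Nat.add_sub_cancel]
      congr 1
      ring

end Stmt17
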